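/- arXiv:2010.14487 — 8 statements merged into one kernel-verified Lean document; each statement's English description precedes it below -/
import Mathlib

section
/- Let C be a finite nonempty set of points in ℝ^d and let P be a finite set of points in ℝ^d with cost(P,C) > 0. If a random point c ∈ P is chosen with probability Pr(c = x) = cost(x,C)/cost(P,C), then the expected cost of P with the enlarged center set satisfies Σ_{x∈P} (cost(x,C)/cost(P,C)) · cost(P, C ∪ {x}) ≤ 5 · OPT_1(P). -/
open Finset
open scoped Classical

/-- `ptCost x C` is `cost(x, C) = min_{c ∈ C} ‖x - c‖²`. -/
noncomputable def ptCost {d : ℕ} (x : EuclideanSpace ℝ (Fin d))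
    (C : Finset (EuclideanSpace ℝ (Fin d))) : ℝ :=
  sInf ((fun c => ‖x - c‖ ^ 2) '' (C : Set (EuclideanSpace ℝ (Fin d))))

/-- `setCost Y C` is `cost(Y, C) = Σ_{x ∈ Y} cost(x, C)`. -/
noncomputable def setCost {d : ℕ} (Y C : Finset (EuclideanSpace ℝ (Fin d))) : ℝ :=
  ∑ x ∈ Y, ptCost x C

/-- The centroid `μ = (Σ_{y ∈ Y} y) / |Y|` of a finite set. -/
noncomputable def centroid {d : ℕ} (Y : Finset (EuclideanSpace ℝ (Fin d))) :
    EuclideanSpace ℝ (Fin d) :=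
  (Y.card : ℝ)⁻¹ • ∑ y ∈ Y, y

/-- `opt1 Y = OPT₁(Y) = Σ_{y ∈ Y} ‖y - μ‖²`. -/
noncomputable def opt1 {d : ℕ} (Y : Finset (EuclideanSpace ℝ (Fin d))) : ℝ :=
  ∑ y ∈ Y, ‖y - centroid Y‖ ^ 2

/-!
Write `D y` for the distance from `y` to `C`, `σ y = ‖y - μ‖` and `ℓ = D μ`, so that
`|D y - ℓ| ≤ σ y`. Adding `x` to the centres costs at most
`min (cost(P,C)) (|P| σ(x)² + OPT₁(P))`, and with `ρ²` the mean of `D²` over `P` this is at most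
`|P| min(ρ, σ x)² + OPT₁(P)`. The `OPT₁` part contributes exactly `OPT₁(P)` to the expectation,
so it remains to show `∑ D(x)² min(ρ, σ x)² ≤ 4 ρ² ∑ σ(x)²`. If `ℓ ≤ ρ` this holds termwise,
as `D ≤ ρ + σ`. If `ℓ > ρ` it holds termwise up to an error `c (D(x)² - ρ²)`, which sums to zero;
the constant `c = ρ²(ℓ - ρ)(ℓ + 3ρ) / (ℓ(ℓ + 2ρ))` makes the termwise bound tight at
`σ = ρ`, `D = ℓ + ρ`.
-/

section Pointwise

variable {ℓ ρ σ D : ℝ}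

lemma sq_mul_min_sq_le_of_le (hℓ : 0 ≤ ℓ) (hℓρ : ℓ ≤ ρ) (hD : |D - ℓ| ≤ σ) :
    D ^ 2 * min ρ σ ^ 2 ≤ 4 * ρ ^ 2 * σ ^ 2 := by
  have hσ : 0 ≤ σ := (abs_nonneg _).trans hD
  have hDabs : |D| ≤ ρ + σ := by
    rw [abs_le] at hD ⊢
    constructor <;> linarith
  have hmin : min ρ σ * (ρ + σ) ≤ 2 * ρ * σ := by
    rcases le_total ρ σ with h | h
    · rw [min_eq_left h]; nlinarith
    · rw [min_eq_right h]; nlinarith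
  calc D ^ 2 * min ρ σ ^ 2 = (min ρ σ * |D|) ^ 2 := by rw [mul_pow, sq_abs, mul_comm]
    _ ≤ (2 * ρ * σ) ^ 2 := by
        have hmin0 : 0 ≤ min ρ σ := le_min (hℓ.trans hℓρ) hσ
        exact pow_le_pow_left₀ (by positivity)
          ((mul_le_mul_of_nonneg_left hDabs hmin0).trans hmin) 2
    _ = 4 * ρ ^ 2 * σ ^ 2 := by ring

lemma sq_mul_min_sq_le_of_ge (hρ : 0 ≤ ρ) (hρℓ : ρ ≤ ℓ) (hD : |D - ℓ| ≤ σ) :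
    ℓ * (ℓ + 2 * ρ) * (D ^ 2 * min ρ σ ^ 2)
      ≤ ℓ * (ℓ + 2 * ρ) * (4 * ρ ^ 2 * σ ^ 2)
        + ρ ^ 2 * (ℓ - ρ) * (ℓ + 3 * ρ) * (D ^ 2 - ρ ^ 2) := by
  have hσ : 0 ≤ σ := (abs_nonneg _).trans hD
  obtain ⟨hDup, hDlow⟩ := abs_sub_le_iff.1 hD
  have hD2 : D ^ 2 ≤ (ℓ + σ) ^ 2 := by nlinarith
  rcases le_total ρ σ with hρσ | hσρ
  · rw [min_eq_left hρσ]
    have key : 3 * ρ ^ 2 * (ℓ + σ) ^ 2 + ρ ^ 2 * (ℓ - ρ) * (ℓ + 3 * ρ)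
        ≤ 4 * ℓ * (ℓ + 2 * ρ) * σ ^ 2 := by
      obtain ⟨e, he, rfl⟩ : ∃ e, 0 ≤ e ∧ σ = ρ + e := ⟨σ - ρ, by linarith, by ring⟩
      obtain ⟨f, hf, rfl⟩ : ∃ f, 0 ≤ f ∧ ℓ = ρ + f := ⟨ℓ - ρ, by linarith, by ring⟩
      rw [← sub_nonneg]; ring_nf; positivity
    nlinarith [mul_le_mul_of_nonneg_left hD2 (by positivity : (0 : ℝ) ≤ 3 * ρ ^ 4),
      mul_le_mul_of_nonneg_left key (sq_nonneg ρ)]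
  · rw [min_eq_right hσρ]
    -- The claim is affine in `D ^ 2`, so it suffices to check it at `D = ℓ ± σ`.
    set B := ℓ * (ℓ + 2 * ρ) * σ ^ 2 - ρ ^ 2 * (ℓ - ρ) * (ℓ + 3 * ρ) with hB
    have hup : B * (ℓ + σ) ^ 2
        ≤ ℓ * (ℓ + 2 * ρ) * (4 * ρ ^ 2 * σ ^ 2) - ρ ^ 2 * (ℓ - ρ) * (ℓ + 3 * ρ) * ρ ^ 2 := by
      rw [hB]
      obtain ⟨e, he, rfl⟩ : ∃ e, 0 ≤ e ∧ ρ = σ + e := ⟨ρ - σ, by linarith, by ring⟩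
      obtain ⟨f, hf, rfl⟩ : ∃ f, 0 ≤ f ∧ ℓ = σ + e + f := ⟨ℓ - σ - e, by linarith, by ring⟩
      rw [← sub_nonneg]; ring_nf; positivity
    have hlow : B * (ℓ - σ) ^ 2
        ≤ ℓ * (ℓ + 2 * ρ) * (4 * ρ ^ 2 * σ ^ 2) - ρ ^ 2 * (ℓ - ρ) * (ℓ + 3 * ρ) * ρ ^ 2 := by
      rw [hB]
      obtain ⟨e, he, rfl⟩ : ∃ e, 0 ≤ e ∧ ρ = σ + e := ⟨ρ - σ, by linarith, by ring⟩
      obtain ⟨f, hf, rfl⟩ : ∃ f, 0 ≤ f ∧ ℓ = σ + e + f := ⟨ℓ - σ - e, by linarith, by ring⟩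
      -- After expanding, the only negative coefficients are absorbed by this square.
      have hsq :
          0 ≤ (f - σ) ^ 2 * (4 * e ^ 4 + 11 * σ * e ^ 3 + σ ^ 2 * e * f + 2 * σ ^ 2 * e ^ 2) := by
        positivity
      rw [← sub_nonneg]
      exact hsq.trans (sub_nonneg.1 (by ring_nf; positivity))
    rcases le_total 0 B with hB0 | hB0
    · nlinarith [mul_le_mul_of_nonneg_left hD2 hB0]
    · have hD2' : (ℓ - σ) ^ 2 ≤ D ^ 2 := by nlinarith
      nlinarith [mul_le_mul_of_nonpos_left hD2' hB0]

end Pointwise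

section Sums

variable {ι : Type*} {P : Finset ι} {D σ : ι → ℝ} {ℓ ρ : ℝ}

lemma sum_sq_mul_min_sq_le (hℓ : 0 ≤ ℓ) (hρ : 0 ≤ ρ) (hmean : ∑ x ∈ P, D x ^ 2 = P.card * ρ ^ 2)
    (hD : ∀ x ∈ P, |D x - ℓ| ≤ σ x) :
    ∑ x ∈ P, D x ^ 2 * min ρ (σ x) ^ 2 ≤ 4 * ρ ^ 2 * ∑ x ∈ P, σ x ^ 2 := by
  rcases le_or_gt ℓ ρ with hℓρ | hρℓ
  · rw [mul_sum]
    exact sum_le_sum fun x hx => (sq_mul_min_sq_le_of_le hℓ hℓρ (hD x hx)).trans_eq (by ring)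
  have hK : 0 < ℓ * (ℓ + 2 * ρ) := by nlinarith
  have hcancel : ∑ x ∈ P, (D x ^ 2 - ρ ^ 2) = 0 := by
    rw [sum_sub_distrib, hmean, sum_const, nsmul_eq_mul, sub_self]
  refine le_of_mul_le_mul_left ?_ hK
  calc ℓ * (ℓ + 2 * ρ) * ∑ x ∈ P, D x ^ 2 * min ρ (σ x) ^ 2
      ≤ ∑ x ∈ P, (ℓ * (ℓ + 2 * ρ) * (4 * ρ ^ 2 * σ x ^ 2)
          + ρ ^ 2 * (ℓ - ρ) * (ℓ + 3 * ρ) * (D x ^ 2 - ρ ^ 2)) := by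
        rw [mul_sum]
        exact sum_le_sum fun x hx => sq_mul_min_sq_le_of_ge hρ hρℓ.le (hD x hx)
    _ = ℓ * (ℓ + 2 * ρ) * (4 * ρ ^ 2 * ∑ x ∈ P, σ x ^ 2) := by
        rw [sum_add_distrib, ← mul_sum, ← mul_sum, ← mul_sum, hcancel, mul_zero, add_zero]

lemma sum_sq_mul_min_le (hℓ : 0 ≤ ℓ) (hD : ∀ x ∈ P, |D x - ℓ| ≤ σ x) :
    ∑ x ∈ P, D x ^ 2 * min (∑ y ∈ P, D y ^ 2) (P.card * σ x ^ 2 + ∑ y ∈ P, σ y ^ 2)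
      ≤ 5 * (∑ y ∈ P, σ y ^ 2) * ∑ y ∈ P, D y ^ 2 := by
  rcases P.eq_empty_or_nonempty with rfl | hP
  · simp
  set S := ∑ y ∈ P, D y ^ 2 with hS
  set O := ∑ y ∈ P, σ y ^ 2
  have hn : (0 : ℝ) < P.card := by exact_mod_cast hP.card_pos
  set ρ := √(S / P.card)
  have hmean : S = P.card * ρ ^ 2 := by
    rw [Real.sq_sqrt (by positivity), mul_div_cancel₀ _ hn.ne']
  have hmin : ∀ x ∈ P, min S (P.card * σ x ^ 2 + O) ≤ P.card * min ρ (σ x) ^ 2 + O := by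
    intro x _
    rcases le_total ρ (σ x) with h | h
    · rw [min_eq_left h, ← hmean]
      exact min_le_left _ _ |>.trans (by linarith [show 0 ≤ O by positivity])
    · rw [min_eq_right h]
      exact min_le_right _ _
  calc ∑ x ∈ P, D x ^ 2 * min S (P.card * σ x ^ 2 + O)
      ≤ ∑ x ∈ P, D x ^ 2 * (P.card * min ρ (σ x) ^ 2 + O) :=
        sum_le_sum fun x hx => mul_le_mul_of_nonneg_left (hmin x hx) (sq_nonneg _)
    _ = P.card * ∑ x ∈ P, D x ^ 2 * min ρ (σ x) ^ 2 + O * S := by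
        rw [mul_sum, mul_comm O, hS, sum_mul, ← sum_add_distrib]
        exact sum_congr rfl fun x _ => by ring
    _ ≤ P.card * (4 * ρ ^ 2 * O) + O * S := by
        have := sum_sq_mul_min_sq_le hℓ (Real.sqrt_nonneg _) (hS.symm.trans hmean) hD
        exact add_le_add_left (mul_le_mul_of_nonneg_left this hn.le) _
    _ = 5 * O * S := by rw [hmean]; ring

end Sums

section Geometry

variable {d : ℕ}

lemma ptCost_eq_infDist_sq (x : EuclideanSpace ℝ (Fin d))
    {C : Finset (EuclideanSpace ℝ (Fin d))} (hC : C.Nonempty) :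
    ptCost x C = Metric.infDist x (C : Set (EuclideanSpace ℝ (Fin d))) ^ 2 := by
  obtain ⟨c, hc, hxc⟩ := C.finite_toSet.isCompact.exists_infDist_eq_dist (C.coe_nonempty.2 hC) x
  have hbdd := (C.finite_toSet.image fun c => ‖x - c‖ ^ 2).bddBelow
  apply le_antisymm
  · rw [hxc, dist_eq_norm]
    exact csInf_le hbdd ⟨c, hc, rfl⟩
  · refine le_csInf ((C.coe_nonempty.2 hC).image _) ?_
    rintro _ ⟨c', hc', rfl⟩
    dsimp only
    rw [← dist_eq_norm]
    exact pow_le_pow_left₀ Metric.infDist_nonneg (Metric.infDist_le_dist_of_mem hc') 2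

lemma ptCost_insert_le (x y : EuclideanSpace ℝ (Fin d)) {C : Finset (EuclideanSpace ℝ (Fin d))}
    (hC : C.Nonempty) : ptCost y (insert x C) ≤ ptCost y C := by
  rw [ptCost_eq_infDist_sq y hC, ptCost_eq_infDist_sq y (insert_nonempty x C)]
  exact pow_le_pow_left₀ Metric.infDist_nonneg
    (Metric.infDist_le_infDist_of_subset (by simp) (C.coe_nonempty.2 hC)) 2

lemma ptCost_insert_le_norm_sub_sq (x y : EuclideanSpace ℝ (Fin d))
    (C : Finset (EuclideanSpace ℝ (Fin d))) : ptCost y (insert x C) ≤ ‖y - x‖ ^ 2 := by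
  rw [ptCost_eq_infDist_sq y (insert_nonempty x C), ← dist_eq_norm]
  exact pow_le_pow_left₀ Metric.infDist_nonneg (Metric.infDist_le_dist_of_mem (by simp)) 2

lemma sum_norm_sub_sq_eq (P : Finset (EuclideanSpace ℝ (Fin d))) (x : EuclideanSpace ℝ (Fin d)) :
    ∑ y ∈ P, ‖y - x‖ ^ 2 = P.card * ‖x - _root_.centroid P‖ ^ 2 + opt1 P := by
  rcases P.eq_empty_or_nonempty with rfl | hP
  · simp [opt1]
  set μ := _root_.centroid P with hμ
  have hsum : ∑ y ∈ P, (y - μ) = 0 := by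
    rw [sum_sub_distrib, sum_const, ← Nat.cast_smul_eq_nsmul ℝ, hμ, _root_.centroid, smul_smul,
      mul_inv_cancel₀ (by simpa using hP.ne_empty), one_smul, sub_self]
  have hexpand : ∀ y, ‖y - x‖ ^ 2 = ‖y - μ‖ ^ 2 - 2 * inner ℝ (y - μ) (x - μ) + ‖x - μ‖ ^ 2 :=
    fun y => by rw [← norm_sub_sq_real, sub_sub_sub_cancel_right]
  simp only [hexpand, sum_add_distrib, sum_sub_distrib, ← mul_sum, ← sum_inner, hsum,
    inner_zero_left, sum_const, nsmul_eq_mul, opt1]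
  ring

lemma setCost_insert_le (P : Finset (EuclideanSpace ℝ (Fin d))) (x : EuclideanSpace ℝ (Fin d))
    {C : Finset (EuclideanSpace ℝ (Fin d))} (hC : C.Nonempty) :
    setCost P (insert x C) ≤ min (setCost P C) (P.card * ‖x - _root_.centroid P‖ ^ 2 + opt1 P) := by
  rw [← sum_norm_sub_sq_eq]
  exact le_min (sum_le_sum fun y _ => ptCost_insert_le x y hC)
    (sum_le_sum fun y _ => ptCost_insert_le_norm_sub_sq x y C)

end Geometry

theorem expected_cost_of_covered_cluster_general {d : ℕ}
    (C P : Finset (EuclideanSpace ℝ (Fin d))) (hC : C.Nonempty) :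
    ∑ x ∈ P, (ptCost x C / setCost P C) * setCost P (insert x C) ≤ 5 * opt1 P := by
  set μ := centroid P
  set D := fun y => Metric.infDist y (C : Set (EuclideanSpace ℝ (Fin d)))
  have hcost : ∀ y, ptCost y C = D y ^ 2 := fun y => ptCost_eq_infDist_sq y hC
  have hS : setCost P C = ∑ y ∈ P, D y ^ 2 := sum_congr rfl fun y _ => hcost y
  have hS0 : 0 ≤ setCost P C := hS ▸ sum_nonneg fun y _ => sq_nonneg (D y)
  have hD : ∀ y ∈ P, |D y - D μ| ≤ ‖y - μ‖ := fun y _ => by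
    simpa [Real.dist_eq, dist_eq_norm] using (Metric.lipschitz_infDist_pt _).dist_le_mul y μ
  calc ∑ x ∈ P, ptCost x C / setCost P C * setCost P (insert x C)
      ≤ (∑ x ∈ P, D x ^ 2 * min (∑ y ∈ P, D y ^ 2)
          (P.card * ‖x - μ‖ ^ 2 + ∑ y ∈ P, ‖y - μ‖ ^ 2)) / setCost P C := by
        rw [sum_div, ← hS]
        refine sum_le_sum fun x _ => ?_
        rw [hcost, div_mul_eq_mul_div]
        exact div_le_div_of_nonneg_right
          (mul_le_mul_of_nonneg_left (setCost_insert_le P x hC) (sq_nonneg _)) hS0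
    _ ≤ 5 * opt1 P := by
        refine div_le_of_le_mul₀ hS0 (by unfold opt1; positivity) ?_
        rw [hS]
        exact sum_sq_mul_min_le Metric.infDist_nonneg hD

/-- If a random point `c ∈ P` is chosen with probability `cost(c,C)/cost(P,C)`, then the
expected cost of `P` with the enlarged center set `C ∪ {c}` is at most `5 · OPT₁(P)`. -/
theorem expected_cost_of_covered_cluster {d : ℕ}
    (C P : Finset (EuclideanSpace ℝ (Fin d))) (hC : C.Nonempty)
    (hP : 0 < setCost P C) :
    ∑ x ∈ P, (ptCost x C / setCost P C) * setCost P (insert x C) ≤ 5 * opt1 P :=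
  expected_cost_of_covered_cluster_general C P hC
end

section
/- Let C be a finite nonempty set of points in ℝ^d and define, for x, y ∈ ℝ^d, f(x,y) := cost(x,C)·min{‖x−y‖², cost(y,C)} + cost(y,C)·min{‖x−y‖², cost(x,C)}. Then for all x, y ∈ ℝ^d, f(x,y) ≤ 5 · min{cost(x,C), cost(y,C)} · ‖x−y‖². -/
open Finset
open scoped Classical

lemma ptCost_le {d : ℕ} (x : EuclideanSpace ℝ (Fin d))
    (C : Finset (EuclideanSpace ℝ (Fin d))) {c : EuclideanSpace ℝ (Fin d)}
    (hc : c ∈ C) : ptCost x C ≤ ‖x - c‖ ^ 2 := by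
  apply csInf_le
  · exact (C.finite_toSet.image _).bddBelow
  · exact ⟨c, hc, rfl⟩

lemma ptCost_nonneg {d : ℕ} (x : EuclideanSpace ℝ (Fin d))
    (C : Finset (EuclideanSpace ℝ (Fin d))) (hC : C.Nonempty) :
    0 ≤ ptCost x C := by
  apply le_csInf
  · exact ⟨_, hC.choose, hC.choose_spec, rfl⟩
  · rintro b ⟨c, _, rfl⟩; positivity

lemma ptCost_exists {d : ℕ} (x : EuclideanSpace ℝ (Fin d))
    (C : Finset (EuclideanSpace ℝ (Fin d))) (hC : C.Nonempty) :
    ∃ c ∈ C, ptCost x C = ‖x - c‖ ^ 2 := by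
  have hne : ((fun c => ‖x - c‖ ^ 2) '' (C : Set (EuclideanSpace ℝ (Fin d)))).Nonempty :=
    ⟨_, hC.choose, hC.choose_spec, rfl⟩
  obtain ⟨c, hc, h⟩ := hne.csInf_mem (C.finite_toSet.image _)
  exact ⟨c, hc, h.symm⟩

lemma ptCost_triangle {d : ℕ} (C : Finset (EuclideanSpace ℝ (Fin d)))
    (hC : C.Nonempty) (x y : EuclideanSpace ℝ (Fin d)) :
    ptCost x C ≤ 2 * ‖x - y‖ ^ 2 + 2 * ptCost y C := by
  obtain ⟨c, hc, heq⟩ := ptCost_exists y C hC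
  have h1 : ptCost x C ≤ ‖x - c‖ ^ 2 := ptCost_le x C hc
  have h2 : ‖x - c‖ ≤ ‖x - y‖ + ‖y - c‖ := by
    have := norm_add_le (x - y) (y - c)
    simpa using this
  rw [heq]
  nlinarith [norm_nonneg (x - y), norm_nonneg (y - c), norm_nonneg (x - c),
    sq_nonneg (‖x - y‖ - ‖y - c‖)]

/-- For `f(x,y) = cost(x,C)·min{‖x−y‖², cost(y,C)} + cost(y,C)·min{‖x−y‖², cost(x,C)}`,
we have `f(x,y) ≤ 5 · min{cost(x,C), cost(y,C)} · ‖x−y‖²`. -/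
theorem f_le_five_min_cost_mul_sq_dist {d : ℕ}
    (C : Finset (EuclideanSpace ℝ (Fin d))) (hC : C.Nonempty)
    (x y : EuclideanSpace ℝ (Fin d)) :
    ptCost x C * min (‖x - y‖ ^ 2) (ptCost y C) +
        ptCost y C * min (‖x - y‖ ^ 2) (ptCost x C) ≤
      5 * min (ptCost x C) (ptCost y C) * ‖x - y‖ ^ 2 := by
  have ha := ptCost_nonneg x C hC
  have hb := ptCost_nonneg y C hC
  have hab := ptCost_triangle C hC x y
  have hba := ptCost_triangle C hC y x
  have hsym : ‖y - x‖ = ‖x - y‖ := norm_sub_rev y x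
  rw [hsym] at hba
  have ht : (0:ℝ) ≤ ‖x - y‖ ^ 2 := by positivity
  set a := ptCost x C
  set b := ptCost y C
  set t := ‖x - y‖ ^ 2
  rcases min_cases t b with ⟨h1, h1'⟩ | ⟨h1, h1'⟩ <;>
    rcases min_cases t a with ⟨h2, h2'⟩ | ⟨h2, h2'⟩ <;>
    rcases min_cases a b with ⟨h3, h3'⟩ | ⟨h3, h3'⟩ <;>
    rw [h1, h2, h3] <;> nlinarith
end

section
/- Let P be a finite nonempty set of points in ℝ^d and for φ : P → ℝ_{≥0} with Σ_{z∈P} φ(z) > 0 define F(φ) := (Σ_{(x,y)∈P×P} min{φ(x),φ(y)}·‖x−y‖²) / (2·Σ_{z∈P} φ(z)). Then for every φ : P → ℝ_{≥0} with Σ_{z∈P} φ(z) > 0, there exists ψ : P → {0,1} with Σ_{z∈P} ψ(z) > 0 such that F(φ) ≤ F(ψ). -/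
open Finset
open scoped Classical

/-! Cutting `φ ≥ 0` at its smallest positive value `m` writes it as `min φ m + (φ - min φ m)`,
where `min φ m` is `m` times the indicator of the support of `φ` and the remainder has strictly
smaller support. Both the numerator and the denominator of `F` are additive along this
decomposition (for the numerator because of the identity `min_eq_min_min_add_min_sub`), so
induction on the support shows that the ratio of numerator to denominator at `φ` is at most its
largest value at indicators of nonempty subsets of `P`. -/

section MinPairSum

variable {α : Type*} (s : Finset α) (c : α → α → ℝ)

def minPairSum (φ : α → ℝ) : ℝ := ∑ x ∈ s, ∑ y ∈ s, min (φ x) (φ y) * c x y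

variable {s c}

theorem min_eq_min_min_add_min_sub (a b m : ℝ) :
    min a b = min (min a m) (min b m) + min (a - min a m) (b - min b m) := by
  grind

theorem minPairSum_congr {φ ψ : α → ℝ} (h : ∀ x ∈ s, φ x = ψ x) :
    minPairSum s c φ = minPairSum s c ψ :=
  sum_congr rfl fun x hx => sum_congr rfl fun y hy => by rw [h x hx, h y hy]

theorem minPairSum_const_mul {m : ℝ} (hm : 0 ≤ m) (φ : α → ℝ) :
    minPairSum s c (fun x => m * φ x) = m * minPairSum s c φ := by
  simp only [minPairSum, mul_sum, ← mul_min_of_nonneg _ _ hm, mul_assoc]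

theorem minPairSum_eq_min_add_sub (φ : α → ℝ) (m : ℝ) :
    minPairSum s c φ =
      minPairSum s c (fun x => min (φ x) m) + minPairSum s c (fun x => φ x - min (φ x) m) := by
  simp only [minPairSum, ← sum_add_distrib, ← add_mul, ← min_eq_min_min_add_min_sub]

theorem minPairSum_le_of_forall_indicator {R : ℝ}
    (hR : ∀ T ⊆ s, minPairSum s c ((T : Set α).indicator 1) ≤
      R * ∑ z ∈ s, (T : Set α).indicator 1 z)
    {φ : α → ℝ} (hφ : ∀ x ∈ s, 0 ≤ φ x) : minPairSum s c φ ≤ R * ∑ z ∈ s, φ z := by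
  induction hn : #(s.filter (0 < φ ·)) using Nat.strong_induction_on generalizing φ with
  | _ n ih =>
  set T := s.filter (0 < φ ·)
  rcases T.eq_empty_or_nonempty with hT | hT
  · have hφ0 : ∀ x ∈ s, φ x = 0 := fun x hx =>
      le_antisymm (not_lt.1 (filter_eq_empty_iff.1 hT hx)) (hφ x hx)
    rw [minPairSum_congr hφ0, sum_congr rfl hφ0]
    simp [minPairSum]
  obtain ⟨x₀, hx₀, hx₀_min⟩ := T.exists_min_image φ hT
  set m := φ x₀
  set ψ := fun x => φ x - min (φ x) m
  have hm : 0 ≤ m := (mem_filter.1 hx₀).2.le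
  have hcut : ∀ x ∈ s, min (φ x) m = m * (T : Set α).indicator 1 x := by
    intro x hx
    by_cases hpos : 0 < φ x
    · have hxT : x ∈ T := mem_filter.2 ⟨hx, hpos⟩
      simp [Set.indicator_of_mem (mem_coe.2 hxT), hx₀_min x hxT]
    · have hxT : x ∉ T := fun h => hpos (mem_filter.1 h).2
      simp [Set.indicator_of_notMem (mt mem_coe.1 hxT), le_antisymm (not_lt.1 hpos) (hφ x hx), hm]
  have hψ : ∀ x ∈ s, 0 ≤ ψ x := fun x _ => sub_nonneg.2 (min_le_left _ _)
  have hcard : #(s.filter (0 < ψ ·)) < n := by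
    refine hn ▸ (card_le_card fun x hx => ?_).trans_lt (card_erase_lt_of_mem hx₀)
    obtain ⟨hxs, hx⟩ := mem_filter.1 hx
    have hmx : m < φ x := by simpa [ψ] using hx
    exact mem_erase.2 ⟨by rintro rfl; exact hmx.false, mem_filter.2 ⟨hxs, hm.trans_lt hmx⟩⟩
  have hsum : ∑ z ∈ s, φ z = m * ∑ z ∈ s, (T : Set α).indicator 1 z + ∑ z ∈ s, ψ z := by
    rw [mul_sum, ← sum_congr rfl hcut, ← sum_add_distrib]
    simp [ψ]
  calc minPairSum s c φ
      = m * minPairSum s c ((T : Set α).indicator 1) + minPairSum s c ψ := by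
        rw [minPairSum_eq_min_add_sub φ m, minPairSum_congr hcut, minPairSum_const_mul hm]
    _ ≤ m * (R * ∑ z ∈ s, (T : Set α).indicator 1 z) + R * ∑ z ∈ s, ψ z :=
        add_le_add (mul_le_mul_of_nonneg_left (hR T (filter_subset _ _)) hm) (ih _ hcard hψ rfl)
    _ = R * ∑ z ∈ s, φ z := by rw [hsum]; ring

theorem exists_indicator_div_le {φ : α → ℝ} (hφ : ∀ x ∈ s, 0 ≤ φ x)
    (hφpos : 0 < ∑ z ∈ s, φ z) :
    ∃ T ⊆ s, T.Nonempty ∧ minPairSum s c φ / ∑ z ∈ s, φ z ≤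
      minPairSum s c ((T : Set α).indicator 1) / ∑ z ∈ s, (T : Set α).indicator 1 z := by
  have hcard : ∀ T ⊆ s, ∑ z ∈ s, (T : Set α).indicator (1 : α → ℝ) z = #T := fun T hT => by
    simp [sum_indicator_subset _ hT]
  obtain ⟨T, hT, hT_max⟩ := (s.powerset.filter Finset.Nonempty).exists_max_image
    (fun T => minPairSum s c ((T : Set α).indicator 1) / ∑ z ∈ s, (T : Set α).indicator 1 z)
    ⟨s, mem_filter.2 ⟨mem_powerset_self s, nonempty_of_sum_ne_zero hφpos.ne'⟩⟩
  obtain ⟨hTs, hTne⟩ := mem_filter.1 hT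
  refine ⟨T, mem_powerset.1 hTs, hTne, ?_⟩
  rw [div_le_iff₀ hφpos]
  refine minPairSum_le_of_forall_indicator (fun T' hT' => ?_) hφ
  rcases T'.eq_empty_or_nonempty with rfl | hT'ne
  · simp [minPairSum]
  · rw [← div_le_iff₀ (by rw [hcard T' hT']; exact_mod_cast hT'ne.card_pos)]
    exact hT_max T' (mem_filter.2 ⟨mem_powerset.2 hT', hT'ne⟩)

end MinPairSum

theorem exists_boolean_maximizer_general {d : ℕ}
    (P : Finset (EuclideanSpace ℝ (Fin d)))
    (φ : EuclideanSpace ℝ (Fin d) → ℝ) (hφ : ∀ x ∈ P, 0 ≤ φ x)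
    (hφpos : 0 < ∑ z ∈ P, φ z) :
    ∃ ψ : EuclideanSpace ℝ (Fin d) → ℝ,
      (∀ x ∈ P, ψ x = 0 ∨ ψ x = 1) ∧ 0 < ∑ z ∈ P, ψ z ∧
        (∑ x ∈ P, ∑ y ∈ P, min (φ x) (φ y) * ‖x - y‖ ^ 2) / (2 * ∑ z ∈ P, φ z) ≤
          (∑ x ∈ P, ∑ y ∈ P, min (ψ x) (ψ y) * ‖x - y‖ ^ 2) / (2 * ∑ z ∈ P, ψ z) := by
  obtain ⟨T, hTP, hTne, hle⟩ := exists_indicator_div_le (c := fun x y => ‖x - y‖ ^ 2) hφ hφpos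
  refine ⟨(T : Set _).indicator 1, fun x _ => ?_, ?_, ?_⟩
  · by_cases hx : x ∈ T <;> simp [hx]
  · simpa [sum_indicator_subset _ hTP] using hTne
  · rw [div_mul_eq_div_div_swap, div_mul_eq_div_div_swap]
    exact div_le_div_of_nonneg_right hle zero_le_two

/-- `F(φ)` is maximized over nonnegative weights by a 0/1-valued weight vector:
for every `φ : P → ℝ≥0` with positive total weight there is `ψ : P → {0,1}` with
positive total weight such that `F(φ) ≤ F(ψ)`, where
`F(φ) = (Σ_{(x,y)∈P×P} min{φ(x),φ(y)}·‖x−y‖²) / (2·Σ_{z∈P} φ(z))`. -/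
theorem exists_boolean_maximizer {d : ℕ}
    (P : Finset (EuclideanSpace ℝ (Fin d))) (hP : P.Nonempty)
    (φ : EuclideanSpace ℝ (Fin d) → ℝ) (hφ : ∀ x ∈ P, 0 ≤ φ x)
    (hφpos : 0 < ∑ z ∈ P, φ z) :
    ∃ ψ : EuclideanSpace ℝ (Fin d) → ℝ,
      (∀ x ∈ P, ψ x = 0 ∨ ψ x = 1) ∧ 0 < ∑ z ∈ P, ψ z ∧
        (∑ x ∈ P, ∑ y ∈ P, min (φ x) (φ y) * ‖x - y‖ ^ 2) / (2 * ∑ z ∈ P, φ z) ≤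
          (∑ x ∈ P, ∑ y ∈ P, min (ψ x) (ψ y) * ‖x - y‖ ^ 2) / (2 * ∑ z ∈ P, ψ z) :=
  exists_boolean_maximizer_general P φ hφ hφpos
end

section
/- Let k ≥ 1, t ≥ 1, and κ ≥ 0 be integers with t ≤ k, and let a₁ ≥ a₂ ≥ … ≥ a_t be integers such that a₁ = k, a_t > κ, and a_i − a_{i+1} ∈ {0,1} for all 1 ≤ i < t. Then Σ_{i=1}^t 1/a_i ≤ 1 + ln(k/(κ+1)). -/
/-!
Because the sequence drops by at most one per step and stays above `s = a t`, we have
`a i ≥ max s (k + 1 - i)`. Extending the sum to `i ≤ k` and reflecting `i ↦ k + 1 - i` gives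
`∑_{v ≤ k} 1 / max s v`: the `s` terms with `v ≤ s` contribute exactly `1`, and the tail
`∑_{s < v ≤ k} 1 / v` telescopes against `log k - log s`.
-/

open Finset Real

lemma inv_add_one_le_log_add_one_sub_log {x : ℝ} (hx : 0 < x) :
    (x + 1)⁻¹ ≤ log (x + 1) - log x := by
  have h := one_sub_inv_le_log_of_pos (div_pos (by positivity : 0 < x + 1) hx)
  rwa [log_div (by positivity) hx.ne', inv_div, one_sub_div (by positivity), add_sub_cancel_left,
    one_div] at h

lemma sum_Ioc_inv_le_log_sub_log {m n : ℕ} (hm : 0 < m) (hmn : m ≤ n) :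
    ∑ v ∈ Ioc m n, (v : ℝ)⁻¹ ≤ log n - log m := by
  rw [← Ico_add_one_add_one_eq_Ioc, ← sum_Ico_add', ← sum_Ico_sub (fun v : ℕ ↦ log v) hmn]
  gcongr with v hv
  push_cast
  exact inv_add_one_le_log_add_one_sub_log (Nat.cast_pos.2 (hm.trans_le (mem_Ico.1 hv).1))

lemma sum_Icc_inv_max_le_one_add_log {s k : ℕ} (hs : 0 < s) (hsk : s ≤ k) :
    ∑ v ∈ Icc 1 k, ((max s v : ℕ) : ℝ)⁻¹ ≤ 1 + log (k / s) := by
  have h_low : ∑ v ∈ Ioc 0 s, ((max s v : ℕ) : ℝ)⁻¹ = 1 := by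
    rw [sum_congr rfl fun v hv ↦ by rw [max_eq_left (mem_Ioc.1 hv).2]]
    simp [hs.ne']
  have h_high : ∑ v ∈ Ioc s k, ((max s v : ℕ) : ℝ)⁻¹ = ∑ v ∈ Ioc s k, (v : ℝ)⁻¹ :=
    sum_congr rfl fun v hv ↦ by rw [max_eq_right (mem_Ioc.1 hv).1.le]
  rw [show Icc 1 k = Ioc 0 k from Icc_add_one_left_eq_Ioc 0 k, ← sum_Ioc_consecutive _ hs.le hsk,
    h_low, h_high, log_div (Nat.cast_pos.2 (hs.trans_le hsk)).ne' (Nat.cast_pos.2 hs).ne']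
  linarith [sum_Ioc_inv_le_log_sub_log hs hsk]

lemma sum_Icc_one_reflect {M : Type*} [AddCommMonoid M] (f : ℕ → M) (n : ℕ) :
    ∑ i ∈ Icc 1 n, f (n + 1 - i) = ∑ i ∈ Icc 1 n, f i :=
  sum_nbij' (n + 1 - ·) (n + 1 - ·) (by simp; omega) (by simp; omega) (by simp; omega)
    (by simp; omega) fun _ _ ↦ rfl

lemma le_add_sub_of_le_add_one {a : ℕ → ℕ} {m n : ℕ} (hmn : m ≤ n)
    (h : ∀ i, m ≤ i → i < n → a i ≤ a (i + 1) + 1) : a m ≤ a n + (n - m) := by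
  induction n, hmn using Nat.le_induction with
  | base => simp
  | succ n hmn ih =>
    have := h n hmn n.lt_succ_self
    have := ih fun i hi hin ↦ h i hi (by omega)
    omega

theorem harmonic_series_bound_general (k t κ : ℕ) (ht : 1 ≤ t) (htk : t ≤ k)
    (a : ℕ → ℕ) (hmono : ∀ i j, 1 ≤ i → i ≤ j → j ≤ t → a j ≤ a i)
    (ha1 : a 1 = k) (hat : κ < a t)
    (hstep : ∀ i, 1 ≤ i → i < t → a i = a (i + 1) ∨ a i = a (i + 1) + 1) :
    ∑ i ∈ Finset.Icc 1 t, (1 : ℝ) / (a i : ℝ) ≤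
      1 + Real.log ((k : ℝ) / ((κ : ℝ) + 1)) := by
  have hs : 0 < a t := by omega
  have hsk : a t ≤ k := ha1 ▸ hmono 1 t le_rfl ht le_rfl
  have h_lower (i : ℕ) (hi : i ∈ Icc 1 t) : max (a t) (k + 1 - i) ≤ a i := by
    obtain ⟨h1i, hit⟩ := mem_Icc.1 hi
    have := le_add_sub_of_le_add_one (a := a) h1i fun j hj hji ↦ by
      rcases hstep j hj (by omega) with h | h <;> omega
    exact max_le (hmono i t h1i hit le_rfl) (by omega)
  simp only [one_div]
  calc ∑ i ∈ Icc 1 t, (a i : ℝ)⁻¹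
      ≤ ∑ i ∈ Icc 1 t, ((max (a t) (k + 1 - i) : ℕ) : ℝ)⁻¹ := by
        gcongr with i hi
        exact h_lower i hi
    _ ≤ ∑ i ∈ Icc 1 k, ((max (a t) (k + 1 - i) : ℕ) : ℝ)⁻¹ :=
        sum_le_sum_of_subset_of_nonneg (Icc_subset_Icc_right htk) fun _ _ _ ↦ by positivity
    _ = ∑ v ∈ Icc 1 k, ((max (a t) v : ℕ) : ℝ)⁻¹ :=
        sum_Icc_one_reflect (fun v ↦ ((max (a t) v : ℕ) : ℝ)⁻¹) k
    _ ≤ 1 + log (k / a t) := sum_Icc_inv_max_le_one_add_log hs hsk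
    _ ≤ 1 + log (k / (κ + 1)) := by
        have : ((κ : ℝ) + 1) ≤ a t := by exact_mod_cast hat
        gcongr
        exact div_pos (Nat.cast_pos.2 (hs.trans_le hsk)) (by positivity)

/-- Harmonic-type bound: if `a 1 = k ≥ a 2 ≥ … ≥ a t > κ` are integers dropping by at most one
at a time, then `Σ_{i=1}^{t} 1/aᵢ ≤ 1 + ln(k/(κ+1))`. -/
theorem harmonic_series_bound (k t κ : ℕ) (hk : 1 ≤ k) (ht : 1 ≤ t) (htk : t ≤ k)
    (a : ℕ → ℕ) (hmono : ∀ i j, 1 ≤ i → i ≤ j → j ≤ t → a j ≤ a i)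
    (ha1 : a 1 = k) (hat : κ < a t)
    (hstep : ∀ i, 1 ≤ i → i < t → a i = a (i + 1) ∨ a i = a (i + 1) + 1) :
    ∑ i ∈ Finset.Icc 1 t, (1 : ℝ) / (a i : ℝ) ≤
      1 + Real.log ((k : ℝ) / ((κ : ℝ) + 1)) :=
  harmonic_series_bound_general k t κ ht htk a hmono ha1 hat hstep
end

section
/- Let k ≥ 1 be an integer, let c₁,…,c_k be nonnegative reals with S := Σ_{i=1}^k c_i > 0, and let ℓ be a real with 0 < ℓ ≤ k. Then Σ_{i=1}^k c_i · e^{−ℓ·c_i/S} ≤ e^{−ℓ/k} · S. -/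
/-!
Tangent-line trick: with `b = ℓ / k ≤ 1`, the function `t ↦ t e^{-t}` lies below its tangent at
`b` on all of `t ≥ 0`. Summing the tangent bound over `tᵢ = ℓ cᵢ / S`, whose mean is `b`, gives
`Σ tᵢ e^{-tᵢ} ≤ ℓ e^{-b}`, which is the claim after multiplying by `S / ℓ`.
-/

open Finset Real

theorem mul_exp_neg_le_tangent {b t : ℝ} (hb : b ≤ 1) (ht : 0 ≤ t) :
    t * exp (-t) ≤ exp (-b) * ((1 - b) * t + b ^ 2) := by
  have hline : 0 ≤ (1 - b) * t + b ^ 2 := by nlinarith [sq_nonneg b]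
  have key : t ≤ ((1 - b) * t + b ^ 2) * exp (t - b) :=
    -- the middle product equals `t + (1 - b) * (t - b) ^ 2`
    calc t ≤ ((1 - b) * t + b ^ 2) * (t - b + 1) := by
          nlinarith [mul_nonneg (sub_nonneg.2 hb) (sq_nonneg (t - b))]
      _ ≤ ((1 - b) * t + b ^ 2) * exp (t - b) :=
          mul_le_mul_of_nonneg_left (add_one_le_exp _) hline
  calc t * exp (-t) ≤ ((1 - b) * t + b ^ 2) * exp (t - b) * exp (-t) :=
        mul_le_mul_of_nonneg_right key (exp_pos _).le
    _ = exp (-b) * ((1 - b) * t + b ^ 2) := by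
        rw [mul_assoc, ← exp_add]; ring_nf

theorem Finset.sum_mul_exp_neg_le_of_sum_le_card {ι : Type*} (s : Finset ι) (t : ι → ℝ)
    (ht : ∀ i ∈ s, 0 ≤ t i) (hT : ∑ i ∈ s, t i ≤ #s) :
    ∑ i ∈ s, t i * exp (-t i) ≤ (∑ i ∈ s, t i) * exp (-(∑ i ∈ s, t i) / #s) := by
  rcases s.eq_empty_or_nonempty with rfl | hs
  · simp
  set T := ∑ i ∈ s, t i
  have hn : (0 : ℝ) < #s := by exact_mod_cast hs.card_pos
  set b := T / #s with hb
  calc ∑ i ∈ s, t i * exp (-t i)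
      ≤ ∑ i ∈ s, exp (-b) * ((1 - b) * t i + b ^ 2) :=
        sum_le_sum fun i hi => mul_exp_neg_le_tangent ((div_le_one hn).2 hT) (ht i hi)
    _ = exp (-b) * ((1 - b) * T + #s * b ^ 2) := by
        rw [← mul_sum, sum_add_distrib, ← mul_sum, sum_const, nsmul_eq_mul]
    _ = T * exp (-T / #s) := by
        rw [hb, neg_div]; field_simp; ring

theorem contraction_small_ell_general (k : ℕ) (c : Fin k → ℝ)
    (hc : ∀ i, 0 ≤ c i) (hS : 0 < ∑ i, c i)
    (ℓ : ℝ) (hℓ : 0 < ℓ) (hℓk : ℓ ≤ (k : ℝ)) :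
    ∑ i, c i * Real.exp (-ℓ * c i / ∑ j, c j) ≤
      Real.exp (-ℓ / (k : ℝ)) * ∑ i, c i := by
  set S := ∑ i, c i
  set t : Fin k → ℝ := fun i => ℓ * c i / S
  have hT : ∑ i, t i = ℓ := by
    simp only [t, ← sum_div, ← mul_sum]; exact mul_div_cancel_right₀ ℓ hS.ne'
  have hbound := sum_mul_exp_neg_le_of_sum_le_card univ t
    (fun i _ => div_nonneg (mul_nonneg hℓ.le (hc i)) hS.le) (by simpa [hT] using hℓk)
  rw [hT, card_univ, Fintype.card_fin] at hbound
  calc ∑ i, c i * exp (-ℓ * c i / S) = S / ℓ * ∑ i, t i * exp (-t i) := by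
        rw [mul_sum]; refine sum_congr rfl fun i _ => ?_
        simp only [t]; field_simp
    _ ≤ S / ℓ * (ℓ * exp (-ℓ / k)) := by gcongr
    _ = exp (-ℓ / k) * S := by field_simp

/-- One-round contraction inequality for `k`-means∥ with `0 < ℓ ≤ k`:
`Σᵢ cᵢ · e^{−ℓ·cᵢ/S} ≤ e^{−ℓ/k} · S` where `S = Σᵢ cᵢ > 0`. -/
theorem contraction_small_ell (k : ℕ) (hk : 1 ≤ k) (c : Fin k → ℝ)
    (hc : ∀ i, 0 ≤ c i) (hS : 0 < ∑ i, c i)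
    (ℓ : ℝ) (hℓ : 0 < ℓ) (hℓk : ℓ ≤ (k : ℝ)) :
    ∑ i, c i * Real.exp (-ℓ * c i / ∑ j, c j) ≤
      Real.exp (-ℓ / (k : ℝ)) * ∑ i, c i :=
  contraction_small_ell_general k c hc hS ℓ hℓ hℓk
end

section
/- Let k ≥ 1 be an integer, let c₁,…,c_k be nonnegative reals with S := Σ_{i=1}^k c_i > 0, and let ℓ be a real with ℓ ≥ k. Then Σ_{i=1}^k c_i · e^{−ℓ·c_i/S} ≤ (k/(e·ℓ)) · S. -/
open Finset

/-!
Each summand is bounded separately: `t e^{-t} ≤ e^{-1}` for every real `t`, and with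
`t = ℓ cᵢ / S` this reads `cᵢ e^{-ℓ cᵢ / S} ≤ S / (e ℓ)`. Summing the `k` bounds gives the claim.
-/

theorem Real.mul_exp_neg_mul_div_le {a S : ℝ} (ha : 0 < a) (hS : 0 < S) (x : ℝ) :
    x * Real.exp (-a * x / S) ≤ S / (Real.exp 1 * a) := by
  have hmax := Real.mul_exp_neg_le_exp_neg_one (a * x / S)
  calc x * Real.exp (-a * x / S)
        = S / a * (a * x / S * Real.exp (-(a * x / S))) := by
          field_simp
    _ ≤ S / a * Real.exp (-1) := by gcongr
    _ = S / (Real.exp 1 * a) := by rw [Real.exp_neg]; field_simp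

theorem contraction_large_ell_general (k : ℕ) (hk : 1 ≤ k) (c : Fin k → ℝ)
    (hS : 0 < ∑ i, c i)
    (ℓ : ℝ) (hℓk : (k : ℝ) ≤ ℓ) :
    ∑ i, c i * Real.exp (-ℓ * c i / ∑ j, c j) ≤
      ((k : ℝ) / (Real.exp 1 * ℓ)) * ∑ i, c i := by
  have hℓ : 0 < ℓ := lt_of_lt_of_le (by exact_mod_cast hk) hℓk
  calc ∑ i, c i * Real.exp (-ℓ * c i / ∑ j, c j)
        ≤ ∑ _i : Fin k, (∑ j, c j) / (Real.exp 1 * ℓ) :=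
          sum_le_sum fun i _ => Real.mul_exp_neg_mul_div_le hℓ hS (c i)
    _ = ((k : ℝ) / (Real.exp 1 * ℓ)) * ∑ i, c i := by
          rw [sum_const, card_univ, Fintype.card_fin, nsmul_eq_mul]
          ring

/-- One-round contraction inequality for `k`-means∥ with `ℓ ≥ k`:
`Σᵢ cᵢ · e^{−ℓ·cᵢ/S} ≤ (k/(e·ℓ)) · S` where `S = Σᵢ cᵢ > 0`. -/
theorem contraction_large_ell (k : ℕ) (hk : 1 ≤ k) (c : Fin k → ℝ)
    (hc : ∀ i, 0 ≤ c i) (hS : 0 < ∑ i, c i)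
    (ℓ : ℝ) (hℓk : (k : ℝ) ≤ ℓ) :
    ∑ i, c i * Real.exp (-ℓ * c i / ∑ j, c j) ≤
      ((k : ℝ) / (Real.exp 1 * ℓ)) * ∑ i, c i :=
  contraction_large_ell_general k hk c hS ℓ hℓk
end

section
/- For all integers k and R with 1 ≤ R < k, the improper integral satisfies ∫_1^∞ e^{−(ρ−1)k} · ρ^{k+R−2} dρ ≤ (e/2)·(4/e)^R. -/
open MeasureTheory

lemma ptwise_bound (k R : ℕ) (hRk : R < k) {ρ : ℝ} (hρ : 1 < ρ) :
    Real.exp (-(ρ - 1) * (k : ℝ)) * ρ ^ ((k : ℝ) + (R : ℝ) - 2) ≤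
      (4 / Real.exp 1) ^ R * ρ ^ (-2 : ℝ) := by
  have hρ0 : (0 : ℝ) < ρ := by linarith
  have hA : ρ * Real.exp (1 - ρ) ≤ 1 := by
    have h1 : ρ ≤ Real.exp (ρ - 1) := by
      have := Real.add_one_le_exp (ρ - 1); linarith
    have h2 : ρ * Real.exp (1 - ρ) ≤ Real.exp (ρ - 1) * Real.exp (1 - ρ) := by
      apply mul_le_mul_of_nonneg_right h1 (Real.exp_nonneg _)
    rwa [← Real.exp_add, show (ρ - 1) + (1 - ρ) = 0 by ring, Real.exp_zero] at h2
  have hA0 : 0 ≤ ρ * Real.exp (1 - ρ) := by positivity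
  have hB : ρ ^ 2 * Real.exp (1 - ρ) ≤ 4 / Real.exp 1 := by
    have h1 : ρ / 2 ≤ Real.exp (ρ / 2 - 1) := by
      have := Real.add_one_le_exp (ρ / 2 - 1); linarith
    have h2 : (ρ / 2) ^ 2 ≤ Real.exp (ρ / 2 - 1) ^ 2 := by
      apply pow_le_pow_left₀ (by linarith) h1 2
    have h3 : Real.exp (ρ / 2 - 1) ^ 2 = Real.exp (ρ - 2) := by
      rw [sq, ← Real.exp_add]; ring_nf
    rw [h3] at h2
    have h4 : ρ ^ 2 * Real.exp (1 - ρ) ≤ 4 * Real.exp (ρ - 2) * Real.exp (1 - ρ) := by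
      apply mul_le_mul_of_nonneg_right (by nlinarith) (Real.exp_nonneg _)
    calc ρ ^ 2 * Real.exp (1 - ρ) ≤ 4 * Real.exp (ρ - 2) * Real.exp (1 - ρ) := h4
      _ = 4 * Real.exp (-1) := by rw [mul_assoc, ← Real.exp_add]; ring_nf
      _ = 4 / Real.exp 1 := by rw [Real.exp_neg]; ring
  have hB0 : 0 ≤ ρ ^ 2 * Real.exp (1 - ρ) := by positivity
  have key : Real.exp (-(ρ - 1) * (k : ℝ)) * ρ ^ ((k : ℝ) + (R : ℝ) - 2)
      = (ρ * Real.exp (1 - ρ)) ^ (k - R) * (ρ ^ 2 * Real.exp (1 - ρ)) ^ R * ρ ^ (-2 : ℝ) := by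
    have hkR : ((k - R : ℕ) : ℝ) = (k : ℝ) - R := by
      push_cast [hRk.le]; ring
    rw [mul_pow, mul_pow, ← pow_mul]
    rw [← Real.rpow_natCast ρ (k - R), ← Real.rpow_natCast ρ (2 * R)]
    rw [← Real.exp_nat_mul, ← Real.exp_nat_mul]
    have e1 : ρ ^ (((k - R : ℕ) : ℝ)) * Real.exp ((k - R : ℕ) * (1 - ρ)) *
        (ρ ^ (((2 * R : ℕ) : ℝ)) * Real.exp ((R : ℕ) * (1 - ρ))) * ρ ^ (-2 : ℝ)
        = (ρ ^ (((k - R : ℕ) : ℝ)) * ρ ^ (((2 * R : ℕ) : ℝ)) * ρ ^ (-2 : ℝ))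
          * (Real.exp ((k - R : ℕ) * (1 - ρ)) * Real.exp ((R : ℕ) * (1 - ρ))) := by ring
    rw [e1, ← Real.rpow_add hρ0, ← Real.rpow_add hρ0, ← Real.exp_add]
    rw [hkR]
    push_cast
    rw [show ((k : ℝ) - R + 2 * R + -2) = (k : ℝ) + R - 2 by ring,
      show ((k : ℝ) - R) * (1 - ρ) + R * (1 - ρ) = -(ρ - 1) * k by ring]
    ring
  rw [key]
  have h5 : (ρ * Real.exp (1 - ρ)) ^ (k - R) ≤ 1 := pow_le_one₀ hA0 hA
  have h6 : (ρ ^ 2 * Real.exp (1 - ρ)) ^ R ≤ (4 / Real.exp 1) ^ R :=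
    pow_le_pow_left₀ hB0 hB R
  have hρ2 : (0 : ℝ) ≤ ρ ^ (-2 : ℝ) := Real.rpow_nonneg hρ0.le _
  calc (ρ * Real.exp (1 - ρ)) ^ (k - R) * (ρ ^ 2 * Real.exp (1 - ρ)) ^ R * ρ ^ (-2 : ℝ)
      ≤ 1 * (4 / Real.exp 1) ^ R * ρ ^ (-2 : ℝ) := by
        apply mul_le_mul_of_nonneg_right _ hρ2
        apply mul_le_mul h5 h6 (by positivity) (by norm_num)
    _ = (4 / Real.exp 1) ^ R * ρ ^ (-2 : ℝ) := by ring

/-- For integers `1 ≤ R < k`, `∫_1^∞ e^{−(ρ−1)k}·ρ^{k+R−2} dρ ≤ (e/2)·(4/e)^R`. -/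
theorem integral_bound (k R : ℕ) (hR : 1 ≤ R) (hRk : R < k) :
    ∫ ρ in Set.Ioi (1 : ℝ), Real.exp (-(ρ - 1) * (k : ℝ)) * ρ ^ ((k : ℝ) + (R : ℝ) - 2) ≤
      (Real.exp 1 / 2) * (4 / Real.exp 1) ^ R := by
  have hint : IntegrableOn (fun ρ : ℝ => (4 / Real.exp 1) ^ R * ρ ^ (-2 : ℝ)) (Set.Ioi 1) :=
    (integrableOn_Ioi_rpow_of_lt (by norm_num) one_pos).const_mul _
  have hval : ∫ ρ in Set.Ioi (1 : ℝ), ρ ^ (-2 : ℝ) = 1 := by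
    rw [integral_Ioi_rpow_of_lt (by norm_num) one_pos]
    norm_num
  have step1 : ∫ ρ in Set.Ioi (1 : ℝ), Real.exp (-(ρ - 1) * (k : ℝ)) * ρ ^ ((k : ℝ) + (R : ℝ) - 2)
      ≤ ∫ ρ in Set.Ioi (1 : ℝ), (4 / Real.exp 1) ^ R * ρ ^ (-2 : ℝ) := by
    apply integral_mono_of_nonneg
    · filter_upwards [ae_restrict_mem measurableSet_Ioi] with ρ hρ
      have : (0 : ℝ) < ρ := lt_trans one_pos hρ
      positivity
    · exact hint
    · filter_upwards [ae_restrict_mem measurableSet_Ioi] with ρ hρ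
      exact ptwise_bound k R hRk hρ
  have step2 : ∫ ρ in Set.Ioi (1 : ℝ), (4 / Real.exp 1) ^ R * ρ ^ (-2 : ℝ)
      = (4 / Real.exp 1) ^ R := by
    rw [integral_const_mul, hval, mul_one]
  have he : (2 : ℝ) ≤ Real.exp 1 := by
    have := Real.add_one_le_exp 1; linarith
  have hpow : (0 : ℝ) ≤ (4 / Real.exp 1) ^ R := by positivity
  calc ∫ ρ in Set.Ioi (1 : ℝ), Real.exp (-(ρ - 1) * (k : ℝ)) * ρ ^ ((k : ℝ) + (R : ℝ) - 2)
      ≤ (4 / Real.exp 1) ^ R := by rw [← step2]; exact step1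
    _ = 1 * (4 / Real.exp 1) ^ R := by ring
    _ ≤ (Real.exp 1 / 2) * (4 / Real.exp 1) ^ R := by
        apply mul_le_mul_of_nonneg_right _ hpow
        linarith
end

section
/- For every ε with 0 < ε < 5, there exist an integer n ≥ 2, points x₁,…,x_n ∈ ℝ, and a finite nonempty set C ⊆ ℝ with W := Σ_{j=1}^n cost(x_j,C) > 0, such that if a random index i is chosen with probability cost(x_i,C)/W and the point x_i is added as a new center, then the expected resulting cost satisfies Σ_{i=1}^n (cost(x_i,C)/W) · Σ_{j=1}^n min{cost(x_j,C), |x_j−x_i|²} ≥ (5−ε) · Σ_{j=1}^n |x_j−μ|², where μ = (1/n)·Σ_{j=1}^n x_j. -/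
open Finset

/-- `ptCostR x C = cost(x, C) = min_{c ∈ C} |x - c|²` for points on the real line. -/
noncomputable def ptCostR (x : ℝ) (C : Finset ℝ) : ℝ :=
  sInf ((fun c => |x - c| ^ 2) '' (C : Set ℝ))

lemma ptCostR_singleton (x c : ℝ) : ptCostR x {c} = |x - c| ^ 2 := by
  unfold ptCostR
  simp

/-- Tightness of the factor 5: for every `0 < ε < 5` there is a one-dimensional instance
(an indexed family `x₁,…,x_n` of points and a nonempty center set `C` with positive total
cost) such that `D²`-sampling one new center from the family yields expected cost at least
`(5−ε)·Σ_j |x_j−μ|²`, where `μ` is the centroid of the family. -/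
theorem five_approx_tight (ε : ℝ) (hε0 : 0 < ε) (hε5 : ε < 5) :
    ∃ (n : ℕ) (x : Fin n → ℝ) (C : Finset ℝ),
      2 ≤ n ∧ C.Nonempty ∧ 0 < ∑ j, ptCostR (x j) C ∧
        (5 - ε) * ∑ j, |x j - (n : ℝ)⁻¹ * ∑ i, x i| ^ 2 ≤
          ∑ i, (ptCostR (x i) C / ∑ j, ptCostR (x j) C) *
            ∑ j, min (ptCostR (x j) C) (|x j - x i| ^ 2) := by
  obtain ⟨m, hm⟩ := exists_nat_gt (15 / ε)
  refine ⟨m + 2, fun j => if j = Fin.last (m + 1) then 1 else 0, {-1}, by omega,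
    ⟨-1, by simp⟩, ?_, ?_⟩
  · -- total cost is (m+1)·1 + 4 > 0
    have : (0:ℝ) < ∑ j : Fin (m+2),
        ptCostR (if j = Fin.last (m + 1) then (1:ℝ) else 0) {-1} := by
      rw [Fin.sum_univ_castSucc]
      simp only [ptCostR_singleton, (Fin.castSucc_lt_last _).ne, if_false, if_pos rfl]
      norm_num
      positivity
    simpa using this
  · have hmR : (15 : ℝ) / ε < m := hm
    set x : Fin (m+2) → ℝ := fun j => if j = Fin.last (m + 1) then 1 else 0 with hx
    have hxc : ∀ j : Fin (m+1), x j.castSucc = 0 := fun j => by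
      simp [hx, (Fin.castSucc_lt_last j).ne]
    have hxl : x (Fin.last (m+1)) = 1 := by simp [hx]
    -- total cost
    have hW : ∑ j, ptCostR (x j) {-1} = (m : ℝ) + 5 := by
      rw [Fin.sum_univ_castSucc]
      simp only [ptCostR_singleton, hxc, hxl]
      rw [Finset.sum_const, Finset.card_univ, Fintype.card_fin, nsmul_eq_mul]
      push_cast
      norm_num
      ring
    -- sum of points
    have hS : ∑ i, x i = 1 := by
      rw [Fin.sum_univ_castSucc]
      simp [hxc, hxl]
    -- one-center optimal cost
    have hopt : ∑ j, |x j - ((m+2 : ℕ) : ℝ)⁻¹ * ∑ i, x i| ^ 2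
        = ((m:ℝ) + 1) / ((m:ℝ) + 2) := by
      rw [hS, Fin.sum_univ_castSucc]
      simp only [hxc, hxl]
      rw [Finset.sum_const, Finset.card_univ, Fintype.card_fin, nsmul_eq_mul]
      have h2 : ((m:ℝ) + 2) ≠ 0 := by positivity
      rw [sq_abs, sq_abs]
      push_cast
      field_simp
      ring
    -- inner sums
    have hinner_last : ∑ j, min (ptCostR (x j) {-1}) (|x j - x (Fin.last (m+1))| ^ 2)
        = (m : ℝ) + 1 := by
      rw [Fin.sum_univ_castSucc]
      simp only [ptCostR_singleton, hxc, hxl]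
      rw [Finset.sum_const, Finset.card_univ, Fintype.card_fin, nsmul_eq_mul]
      norm_num
    have hinner_cs : ∀ i : Fin (m+1),
        ∑ j, min (ptCostR (x j) {-1}) (|x j - x i.castSucc| ^ 2) = 1 := by
      intro i
      rw [Fin.sum_univ_castSucc]
      simp only [ptCostR_singleton, hxc, hxl]
      norm_num
    -- expected cost
    have hE : ∑ i, (ptCostR (x i) {-1} / ∑ j, ptCostR (x j) {-1}) *
        ∑ j, min (ptCostR (x j) {-1}) (|x j - x i| ^ 2)
        = 5 * ((m:ℝ) + 1) / ((m:ℝ) + 5) := by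
      rw [Fin.sum_univ_castSucc]
      have : ∀ i : Fin (m+1),
          (ptCostR (x i.castSucc) {-1} / ∑ j, ptCostR (x j) {-1}) *
            ∑ j, min (ptCostR (x j) {-1}) (|x j - x i.castSucc| ^ 2)
            = 1 / ((m:ℝ) + 5) := by
        intro i
        rw [hinner_cs i, hW, ptCostR_singleton, hxc]
        norm_num
      rw [Finset.sum_congr rfl (fun i _ => this i), hinner_last, hW,
        ptCostR_singleton, hxl]
      rw [Finset.sum_const, Finset.card_univ, Fintype.card_fin, nsmul_eq_mul]
      have h5 : ((m:ℝ) + 5) ≠ 0 := by positivity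
      push_cast
      norm_num
      field_simp
      ring
    rw [hopt, hE]
    have h2 : (0:ℝ) < (m:ℝ) + 2 := by positivity
    have h5 : (0:ℝ) < (m:ℝ) + 5 := by positivity
    rw [← mul_div_assoc, div_le_div_iff₀ h2 h5]
    have hεm : 15 < ε * m := by
      have := (div_lt_iff₀ hε0).mp hmR
      linarith [mul_comm ε (m:ℝ)]
    nlinarith [Nat.cast_nonneg (α := ℝ) m]
end
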